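/- With the scheme setup below, for every i ∈ ZMod n: A₁ * A₂ᵢ = A₂ᵢ * A₁ = (k - 1) • (Σ_{j ∈ ZMod n} A₂ⱼ) + k • A₃ (coefficients in ℤ). Moreover A₁ * A₁ = (n * (v - 1)) • (Σ_{i ∈ ZMod n} A₀ᵢ) + (n * (v - 2)) • A₁. -/
import Mathlib


open Matrix Kronecker

/-- The all-ones matrix. -/
def Jmat (m : Type*) : Matrix m m ℤ := Matrix.of fun _ _ => 1

/-- The cyclic permutation matrix `P` of order `n`, with `P a b = 1` iff `b = a + 1`. -/
def Pmat (n : ℕ) : Matrix (ZMod n) (ZMod n) ℤ := Matrix.of fun a b => if b = a + 1 then 1 else 0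

/-- The power `P^i` for `i ∈ ZMod n` (well defined since `Pⁿ = I`). -/
def Ppow (n : ℕ) [NeZero n] (i : ZMod n) : Matrix (ZMod n) (ZMod n) ℤ := Pmat n ^ i.val

/-- The adjacency matrices `A₀ᵢ = blockDiagonal (Pⁱ ⊗ I_v, Pⁱ ⊗ I_v)`. -/
def A0 (n v : ℕ) [NeZero n] (i : ZMod n) :
    Matrix ((ZMod n × Fin v) ⊕ (ZMod n × Fin v)) ((ZMod n × Fin v) ⊕ (ZMod n × Fin v)) ℤ :=
  Matrix.fromBlocks (Ppow n i ⊗ₖ 1) 0 0 (Ppow n i ⊗ₖ 1)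

/-- The adjacency matrix `A₁ = blockDiagonal (J_n ⊗ (J_v - I_v), J_n ⊗ (J_v - I_v))`. -/
def A1 (n v : ℕ) :
    Matrix ((ZMod n × Fin v) ⊕ (ZMod n × Fin v)) ((ZMod n × Fin v) ⊕ (ZMod n × Fin v)) ℤ :=
  Matrix.fromBlocks (Jmat (ZMod n) ⊗ₖ (Jmat (Fin v) - 1)) 0 0
    (Jmat (ZMod n) ⊗ₖ (Jmat (Fin v) - 1))

/-- The adjacency matrices `A₂ᵢ`, with zero diagonal blocks, upper-right block
`Σ_j Pʲ ⊗ B(i+j)` and lower-left block `Σ_j Pʲ ⊗ (B(-i-j))ᵀ`. -/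
def A2 (n v : ℕ) [NeZero n] (B : ZMod n → Matrix (Fin v) (Fin v) ℤ) (i : ZMod n) :
    Matrix ((ZMod n × Fin v) ⊕ (ZMod n × Fin v)) ((ZMod n × Fin v) ⊕ (ZMod n × Fin v)) ℤ :=
  Matrix.fromBlocks 0 (∑ j : ZMod n, Ppow n j ⊗ₖ B (i + j))
    (∑ j : ZMod n, Ppow n j ⊗ₖ (B (-i - j))ᵀ) 0

/-- The adjacency matrix `A₃`, with zero diagonal blocks, upper-right block
`J_n ⊗ (J_v - Σ_j B j)` and lower-left block `J_n ⊗ (J_v - Σ_j (B j)ᵀ)`. -/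
def A3 (n v : ℕ) [NeZero n] (B : ZMod n → Matrix (Fin v) (Fin v) ℤ) :
    Matrix ((ZMod n × Fin v) ⊕ (ZMod n × Fin v)) ((ZMod n × Fin v) ⊕ (ZMod n × Fin v)) ℤ :=
  Matrix.fromBlocks 0 (Jmat (ZMod n) ⊗ₖ (Jmat (Fin v) - ∑ j : ZMod n, B j))
    (Jmat (ZMod n) ⊗ₖ (Jmat (Fin v) - ∑ j : ZMod n, (B j)ᵀ)) 0

section helpers

lemma Pmat_pow_apply (n : ℕ) [NeZero n] (m : ℕ) (a b : ZMod n) :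
    (Pmat n ^ m) a b = if b = a + (m : ZMod n) then 1 else 0 := by
  induction m generalizing a b with
  | zero => simp [Matrix.one_apply, eq_comm]
  | succ m ih =>
      rw [pow_succ, Matrix.mul_apply]
      have key : ∀ c : ZMod n, (Pmat n ^ m) a c * Pmat n c b =
          if c = a + (m : ZMod n) then (if b = c + 1 then 1 else 0) else 0 := by
        intro c
        rw [ih]
        by_cases hc : c = a + (m : ZMod n) <;> simp [hc, Pmat, eq_comm]
      rw [Finset.sum_congr rfl (fun c _ => key c), Finset.sum_ite_eq' Finset.univ]
      push_cast
      simp [add_assoc]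

lemma Ppow_apply (n : ℕ) [NeZero n] (i : ZMod n) (a b : ZMod n) :
    Ppow n i a b = if b = a + i then 1 else 0 := by
  rw [Ppow, Pmat_pow_apply, ZMod.natCast_val, ZMod.cast_id]

lemma Jmat_mul_Ppow (n : ℕ) [NeZero n] (i : ZMod n) :
    Jmat (ZMod n) * Ppow n i = Jmat (ZMod n) := by
  ext a b
  simp only [Matrix.mul_apply, Jmat, Matrix.of_apply, one_mul, Ppow_apply]
  rw [Finset.sum_eq_single (b - i)]
  · simp
  · intro c _ hc
    rw [if_neg]; intro h; exact hc (by rw [h]; ring)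
  · simp

lemma Ppow_mul_Jmat (n : ℕ) [NeZero n] (i : ZMod n) :
    Ppow n i * Jmat (ZMod n) = Jmat (ZMod n) := by
  ext a b
  simp only [Matrix.mul_apply, Jmat, Matrix.of_apply, mul_one, Ppow_apply]
  rw [Finset.sum_eq_single (a + i)]
  · simp
  · intro c _ hc
    rw [if_neg]; exact fun h => hc h
  · simp

lemma sum_Ppow (n : ℕ) [NeZero n] : ∑ i : ZMod n, Ppow n i = Jmat (ZMod n) := by
  ext a b
  simp only [Matrix.sum_apply, Ppow_apply, Jmat, Matrix.of_apply]
  rw [Finset.sum_eq_single (b - a)]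
  · simp
  · intro c _ hc
    rw [if_neg]; intro h; exact hc (by rw [h]; ring)
  · simp

lemma Jmat_mul_Jmat (m : Type*) [Fintype m] :
    Jmat m * Jmat m = (Fintype.card m : ℤ) • Jmat m := by
  ext a b; simp [Matrix.mul_apply, Jmat]

lemma transpose_Jmat (m : Type*) : (Jmat m)ᵀ = Jmat m := by
  ext a b; simp [Jmat]

lemma kron_sum_right {l p q ι : Type*} (A : Matrix l l ℤ) (s : Finset ι)
    (f : ι → Matrix p q ℤ) :
    A ⊗ₖ (∑ i ∈ s, f i) = ∑ i ∈ s, A ⊗ₖ f i := by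
  ext ⟨a, b⟩ ⟨c, d⟩
  simp [Matrix.sum_apply, Finset.mul_sum]

lemma sum_kron_left {l p q ι : Type*} (A : Matrix p q ℤ) (s : Finset ι)
    (f : ι → Matrix l l ℤ) :
    (∑ i ∈ s, f i) ⊗ₖ A = ∑ i ∈ s, f i ⊗ₖ A := by
  ext ⟨a, b⟩ ⟨c, d⟩
  simp [Matrix.sum_apply, Finset.sum_mul]

lemma rowsum {v n : ℕ} [NeZero n] (k μ : ℕ) (B : ZMod n → Matrix (Fin v) (Fin v) ℤ)
    (hB01 : ∀ g i j, B g i j = 0 ∨ B g i j = 1)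
    (h1 : ∑ g : ZMod n, B g * (B g)ᵀ = (k : ℤ) • 1 + (μ : ℤ) • (Jmat (Fin v) - 1)) :
    (∑ g : ZMod n, B g) * Jmat (Fin v) = (k : ℤ) • Jmat (Fin v) := by
  ext x y
  have hx' : ∑ g : ZMod n, ∑ c : Fin v, B g x c * B g x c = (k : ℤ) := by
    have := congrFun (congrFun h1 x) x
    simp only [Matrix.sum_apply, Matrix.mul_apply, Matrix.transpose_apply, Jmat,
      Matrix.add_apply, Matrix.smul_apply, Matrix.one_apply_eq, Matrix.of_apply,
      Matrix.sub_apply, smul_eq_mul, mul_one, sub_self, mul_zero] at this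
    simpa using this
  have hsq : ∀ g c, B g x c * B g x c = B g x c := by
    intro g c; rcases hB01 g x c with h | h <;> simp [h]
  simp only [hsq] at hx'
  simp only [Matrix.mul_apply, Matrix.sum_apply, Jmat, Matrix.of_apply, mul_one,
    Matrix.smul_apply, smul_eq_mul]
  rw [Finset.sum_comm, hx']

lemma sum_fromBlocks {p q r s ι : Type*} (t : Finset ι)
    (U : ι → Matrix p q ℤ) (L : ι → Matrix r s ℤ) :
    ∑ i ∈ t, Matrix.fromBlocks (0 : Matrix p s ℤ) (U i) (L i) (0 : Matrix r q ℤ) =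
      Matrix.fromBlocks 0 (∑ i ∈ t, U i) (∑ i ∈ t, L i) 0 := by
  ext (a | a) (b | b) <;> simp [Matrix.sum_apply, Matrix.fromBlocks]

lemma sum_fromBlocks_diag {p q r s ι : Type*} (t : Finset ι)
    (U : ι → Matrix p q ℤ) (L : ι → Matrix r s ℤ) :
    ∑ i ∈ t, Matrix.fromBlocks (U i) (0 : Matrix p s ℤ) (0 : Matrix r q ℤ) (L i) =
      Matrix.fromBlocks (∑ i ∈ t, U i) 0 0 (∑ i ∈ t, L i) := by
  ext (a | a) (b | b) <;> simp [Matrix.sum_apply, Matrix.fromBlocks]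

end helpers

/-- `A₁ A₂ᵢ = A₂ᵢ A₁ = (k-1) • Σⱼ A₂ⱼ + k • A₃` and
`A₁ A₁ = n(v-1) • Σᵢ A₀ᵢ + n(v-2) • A₁` (coefficients in `ℤ`). -/
theorem stmt_17 (v k n μ : ℕ) [NeZero n]
    (B : ZMod n → Matrix (Fin v) (Fin v) ℤ)
    (hB01 : ∀ g i j, B g i j = 0 ∨ B g i j = 1)
    (hdisj : ∀ i j (g g' : ZMod n), B g i j = 1 → B g' i j = 1 → g = g')
    (h1 : ∑ g : ZMod n, B g * (B g)ᵀ = (k : ℤ) • 1 + (μ : ℤ) • (Jmat (Fin v) - 1))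
    (h1' : ∑ g : ZMod n, (B g)ᵀ * B g = (k : ℤ) • 1 + (μ : ℤ) • (Jmat (Fin v) - 1))
    (h2 : ∀ h : ZMod n, h ≠ 0 →
      ∑ g : ZMod n, B g * (B (g - h))ᵀ = (μ : ℤ) • (Jmat (Fin v) - 1))
    (h2' : ∀ h : ZMod n, h ≠ 0 →
      ∑ g : ZMod n, (B (g - h))ᵀ * B g = (μ : ℤ) • (Jmat (Fin v) - 1)) :
    (∀ i : ZMod n,
      A1 n v * A2 n v B i =
        ((k : ℤ) - 1) • (∑ j : ZMod n, A2 n v B j) + (k : ℤ) • A3 n v B ∧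
      A2 n v B i * A1 n v =
        ((k : ℤ) - 1) • (∑ j : ZMod n, A2 n v B j) + (k : ℤ) • A3 n v B) ∧
    A1 n v * A1 n v =
      ((n : ℤ) * ((v : ℤ) - 1)) • (∑ i : ZMod n, A0 n v i) +
      ((n : ℤ) * ((v : ℤ) - 2)) • A1 n v := by
  set S := ∑ g : ZMod n, B g with hSdef
  set ST := ∑ g : ZMod n, (B g)ᵀ with hSTdef
  have hST : Sᵀ = ST := by rw [hSdef, hSTdef, Matrix.transpose_sum]
  -- row/column sum facts
  have hSJ : S * Jmat (Fin v) = (k : ℤ) • Jmat (Fin v) := rowsum k μ B hB01 h1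
  have hSTJ : ST * Jmat (Fin v) = (k : ℤ) • Jmat (Fin v) := by
    refine rowsum k μ (fun g => (B g)ᵀ) (fun g i j => hB01 g j i) ?_
    simpa using h1'
  have hJS : Jmat (Fin v) * S = (k : ℤ) • Jmat (Fin v) := by
    have h := congrArg Matrix.transpose hSTJ
    rw [Matrix.transpose_mul, Matrix.transpose_smul, transpose_Jmat, ← hST,
      Matrix.transpose_transpose] at h
    exact h
  have hJST : Jmat (Fin v) * ST = (k : ℤ) • Jmat (Fin v) := by
    have h := congrArg Matrix.transpose hSJ
    rw [Matrix.transpose_mul, Matrix.transpose_smul, transpose_Jmat, hST] at h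
    exact h
  -- reindexing sums
  have hsum1 : ∀ i : ZMod n, ∑ j : ZMod n, B (i + j) = S :=
    fun i => Fintype.sum_equiv (Equiv.addLeft i) _ _ (fun j => rfl)
  have hsum1r : ∀ i : ZMod n, ∑ j : ZMod n, B (j + i) = S :=
    fun i => Fintype.sum_equiv (Equiv.addRight i) _ _ (fun j => rfl)
  have hsum2 : ∀ i : ZMod n, ∑ j : ZMod n, (B (-i - j))ᵀ = ST :=
    fun i => Fintype.sum_equiv (Equiv.subLeft (-i)) _ _ (fun j => rfl)
  have hsum2r : ∀ i : ZMod n, ∑ j : ZMod n, (B (-j - i))ᵀ = ST := by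
    intro i
    refine Fintype.sum_equiv (Equiv.subLeft (-i)) _ _ (fun j => ?_)
    simp only [Equiv.subLeft_apply]
    congr 1
    ring
  -- the four key block products
  have key1 : ∀ i : ZMod n,
      (Jmat (ZMod n) ⊗ₖ (Jmat (Fin v) - 1)) * (∑ j : ZMod n, Ppow n j ⊗ₖ B (i + j)) =
        Jmat (ZMod n) ⊗ₖ ((k : ℤ) • Jmat (Fin v) - S) := by
    intro i
    rw [Finset.mul_sum]
    have e : ∀ j : ZMod n, (Jmat (ZMod n) ⊗ₖ (Jmat (Fin v) - 1)) * (Ppow n j ⊗ₖ B (i + j)) =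
        Jmat (ZMod n) ⊗ₖ ((Jmat (Fin v) - 1) * B (i + j)) := fun j => by
      rw [← Matrix.mul_kronecker_mul, Jmat_mul_Ppow]
    rw [Finset.sum_congr rfl (fun j _ => e j), ← kron_sum_right, ← Finset.mul_sum,
      hsum1 i, sub_mul, one_mul, hJS]
  have key2 : ∀ i : ZMod n,
      (∑ j : ZMod n, Ppow n j ⊗ₖ B (i + j)) * (Jmat (ZMod n) ⊗ₖ (Jmat (Fin v) - 1)) =
        Jmat (ZMod n) ⊗ₖ ((k : ℤ) • Jmat (Fin v) - S) := by
    intro i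
    rw [Finset.sum_mul]
    have e : ∀ j : ZMod n, (Ppow n j ⊗ₖ B (i + j)) * (Jmat (ZMod n) ⊗ₖ (Jmat (Fin v) - 1)) =
        Jmat (ZMod n) ⊗ₖ (B (i + j) * (Jmat (Fin v) - 1)) := fun j => by
      rw [← Matrix.mul_kronecker_mul, Ppow_mul_Jmat]
    rw [Finset.sum_congr rfl (fun j _ => e j), ← kron_sum_right, ← Finset.sum_mul,
      hsum1 i, mul_sub, mul_one, hSJ]
  have key3 : ∀ i : ZMod n,
      (Jmat (ZMod n) ⊗ₖ (Jmat (Fin v) - 1)) * (∑ j : ZMod n, Ppow n j ⊗ₖ (B (-i - j))ᵀ) =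
        Jmat (ZMod n) ⊗ₖ ((k : ℤ) • Jmat (Fin v) - ST) := by
    intro i
    rw [Finset.mul_sum]
    have e : ∀ j : ZMod n, (Jmat (ZMod n) ⊗ₖ (Jmat (Fin v) - 1)) * (Ppow n j ⊗ₖ (B (-i - j))ᵀ) =
        Jmat (ZMod n) ⊗ₖ ((Jmat (Fin v) - 1) * (B (-i - j))ᵀ) := fun j => by
      rw [← Matrix.mul_kronecker_mul, Jmat_mul_Ppow]
    rw [Finset.sum_congr rfl (fun j _ => e j), ← kron_sum_right, ← Finset.mul_sum,
      hsum2 i, sub_mul, one_mul, hJST]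
  have key4 : ∀ i : ZMod n,
      (∑ j : ZMod n, Ppow n j ⊗ₖ (B (-i - j))ᵀ) * (Jmat (ZMod n) ⊗ₖ (Jmat (Fin v) - 1)) =
        Jmat (ZMod n) ⊗ₖ ((k : ℤ) • Jmat (Fin v) - ST) := by
    intro i
    rw [Finset.sum_mul]
    have e : ∀ j : ZMod n, (Ppow n j ⊗ₖ (B (-i - j))ᵀ) * (Jmat (ZMod n) ⊗ₖ (Jmat (Fin v) - 1)) =
        Jmat (ZMod n) ⊗ₖ ((B (-i - j))ᵀ * (Jmat (Fin v) - 1)) := fun j => by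
      rw [← Matrix.mul_kronecker_mul, Ppow_mul_Jmat]
    rw [Finset.sum_congr rfl (fun j _ => e j), ← kron_sum_right, ← Finset.sum_mul,
      hsum2 i, mul_sub, mul_one, hSTJ]
  -- sum of A2's
  have hA2sum : ∑ j : ZMod n, A2 n v B j =
      Matrix.fromBlocks 0 (Jmat (ZMod n) ⊗ₖ S) (Jmat (ZMod n) ⊗ₖ ST) 0 := by
    have hUR : ∑ i : ZMod n, ∑ j : ZMod n, Ppow n j ⊗ₖ B (i + j) =
        Jmat (ZMod n) ⊗ₖ S := by
      rw [Finset.sum_comm]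
      have e : ∀ j' : ZMod n, ∑ j : ZMod n, Ppow n j' ⊗ₖ B (j + j') = Ppow n j' ⊗ₖ S :=
        fun j' => by rw [← kron_sum_right, hsum1r j']
      rw [Finset.sum_congr rfl (fun j' _ => e j'), ← sum_kron_left, sum_Ppow]
    have hLL : ∑ i : ZMod n, ∑ j : ZMod n, Ppow n j ⊗ₖ (B (-i - j))ᵀ =
        Jmat (ZMod n) ⊗ₖ ST := by
      rw [Finset.sum_comm]
      have e : ∀ j' : ZMod n, ∑ j : ZMod n, Ppow n j' ⊗ₖ (B (-j - j'))ᵀ =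
          Ppow n j' ⊗ₖ ST :=
        fun j' => by rw [← kron_sum_right, hsum2r j']
      rw [Finset.sum_congr rfl (fun j' _ => e j'), ← sum_kron_left, sum_Ppow]
    simp only [A2]
    rw [sum_fromBlocks, hUR, hLL]
  -- RHS of the first two identities
  have hRHS : ((k : ℤ) - 1) • (∑ j : ZMod n, A2 n v B j) + (k : ℤ) • A3 n v B =
      Matrix.fromBlocks 0 (Jmat (ZMod n) ⊗ₖ ((k : ℤ) • Jmat (Fin v) - S)) (Jmat (ZMod n) ⊗ₖ ((k : ℤ) • Jmat (Fin v) - ST)) 0 := by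
    rw [hA2sum]
    simp only [A3, ← hSdef, ← hSTdef]
    rw [Matrix.fromBlocks_smul, Matrix.fromBlocks_smul, Matrix.fromBlocks_add]
    ext x y
    rcases x with (⟨a, b⟩ | ⟨a, b⟩) <;> rcases y with (⟨c, d⟩ | ⟨c, d⟩) <;>
        simp only [Matrix.add_apply, Matrix.smul_apply, Matrix.fromBlocks_apply₁₁,
          Matrix.fromBlocks_apply₁₂, Matrix.fromBlocks_apply₂₁, Matrix.fromBlocks_apply₂₂,
          Matrix.zero_apply, Matrix.kroneckerMap_apply, Matrix.sub_apply, Jmat,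
          Matrix.of_apply, smul_eq_mul, mul_zero, add_zero, zero_add, smul_zero] <;>
      ring
  refine ⟨fun i => ⟨?_, ?_⟩, ?_⟩
  · rw [hRHS]
    simp only [A1, A2]
    rw [Matrix.fromBlocks_multiply]
    simp only [Matrix.mul_zero, Matrix.zero_mul, add_zero, zero_add,
      key1 i, key3 i]
  · rw [hRHS]
    simp only [A1, A2]
    rw [Matrix.fromBlocks_multiply]
    simp only [Matrix.mul_zero, Matrix.zero_mul, add_zero, zero_add,
      key2 i, key4 i]
  · have hA0sum : ∑ i : ZMod n, A0 n v i =
        Matrix.fromBlocks (Jmat (ZMod n) ⊗ₖ 1) 0 0 (Jmat (ZMod n) ⊗ₖ 1) := by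
      simp only [A0]
      rw [sum_fromBlocks_diag, ← sum_kron_left, sum_Ppow]
    rw [hA0sum]
    simp only [A1]
    rw [Matrix.fromBlocks_multiply, Matrix.fromBlocks_smul, Matrix.fromBlocks_smul,
      Matrix.fromBlocks_add]
    have hblock : (Jmat (ZMod n) ⊗ₖ (Jmat (Fin v) - 1)) * (Jmat (ZMod n) ⊗ₖ (Jmat (Fin v) - 1)) =
        ((n : ℤ) * ((v : ℤ) - 1)) • (Jmat (ZMod n) ⊗ₖ 1) + ((n : ℤ) * ((v : ℤ) - 2)) • (Jmat (ZMod n) ⊗ₖ (Jmat (Fin v) - 1)) := by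
      rw [← Matrix.mul_kronecker_mul]
      have hJJn : Jmat (ZMod n) * Jmat (ZMod n) = (n : ℤ) • Jmat (ZMod n) := by
        rw [Jmat_mul_Jmat, ZMod.card]
      have hJJv : (Jmat (Fin v) - 1) * (Jmat (Fin v) - 1) =
          ((v : ℤ) - 2) • (Jmat (Fin v) - 1) + ((v : ℤ) - 1) • (1 : Matrix (Fin v) (Fin v) ℤ) := by
        rw [sub_mul, mul_sub, mul_sub, one_mul, mul_one, Jmat_mul_Jmat, Fintype.card_fin]
        ext a b
        simp only [Matrix.sub_apply, Matrix.add_apply, Matrix.smul_apply,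
          Jmat, Matrix.of_apply, smul_eq_mul]
        ring
      rw [hJJn, hJJv]
      ext ⟨a, b⟩ ⟨c, d⟩
      simp only [Matrix.kroneckerMap_apply, Jmat, Matrix.of_apply, Matrix.smul_apply,
        Matrix.add_apply, Matrix.sub_apply, smul_eq_mul]
      ring
    rw [hblock]
    congr 1 <;> simp
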